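/- Assume n ≤ m and let x, y be nonzero complex numbers. Let Ω_0 = ([n]_q/[m+1]_q) v_0 ⊗ w_0, and for 0 ≤ l ≤ n define φ_{l,0} = e_0^l Ω_0, where e_0 acts on V_m ⊗ V_n by e_0(v ⊗ w) = q^{-1} x (f v) ⊗ (K^{-1} w) + q^{-1} y v ⊗ (f w); write φ_{l,0} = ∑_{i=0}^{l} γ_{l,0}^{i,l-i} v_i ⊗ w_{l-i}. Then γ_{l,0}^{l-i,i} = x^{l-i} y^i [l]_q! q^{-l} q^{(l-i)(i-n)} · ([n]_q/[m+1]_q) for 0 ≤ i ≤ l. (The overall factor [n]_q/[m+1]_q is the coefficient c_{0,0} of Ω_0.) -/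

import Mathlib

open scoped BigOperators

/-- The `q`-integer `[r]_q = (q^r - q^{-r})/(q - q⁻¹)`. -/
noncomputable def qint (q : ℂ) (r : ℤ) : ℂ := (q ^ r - q ^ (-r)) / (q - q⁻¹)

/-- The `q`-factorial `[r]_q! = ∏_{s=1}^r [s]_q`. -/
noncomputable def qfact (q : ℂ) (r : ℕ) : ℂ := ∏ s ∈ Finset.range r, qint q ((s : ℤ) + 1)

/-- The `q`-binomial coefficient `[r choose s]_q`. -/
noncomputable def qbinom (q : ℂ) (r s : ℕ) : ℂ := qfact q r / (qfact q s * qfact q (r - s))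

/-- `q` is not a root of unity. -/
def NotRootOfUnity (q : ℂ) : Prop := ∀ k : ℕ, 0 < k → q ^ k ≠ 1

/-- The underlying space of `V_m ⊗ V_n` in terms of the coefficients with respect to the
basis `v_i ⊗ w_j`, `0 ≤ i ≤ m`, `0 ≤ j ≤ n`. -/
abbrev W (m n : ℕ) := Fin (m + 1) → Fin (n + 1) → ℂ

/-- Extension of a coefficient array to all of `ℕ × ℕ`, zero out of range. -/
noncomputable def uext {m n : ℕ} (u : W m n) (a b : ℕ) : ℂ :=
  if h : a ≤ m ∧ b ≤ n then u ⟨a, by omega⟩ ⟨b, by omega⟩ else 0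

/-- The basis vector `v_i ⊗ w_j` of `V_m ⊗ V_n`. -/
def basisW (m n i j : ℕ) : W m n := fun a b => if (a : ℕ) = i ∧ (b : ℕ) = j then 1 else 0

/-- Action of `e` on `V_m ⊗ V_n`: `e (v ⊗ w) = e v ⊗ K w + v ⊗ e w`, where on `V_m`
`e v_i = [m+1-i]_q v_{i-1}` and `K v_i = q^{m-2i} v_i`. -/
noncomputable def eT (q : ℂ) (m n : ℕ) (u : W m n) : W m n := fun a b =>
  qint q ((m : ℤ) - ((a : ℕ) : ℤ)) * q ^ ((n : ℤ) - 2 * ((b : ℕ) : ℤ)) *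
      uext u ((a : ℕ) + 1) (b : ℕ)
    + qint q ((n : ℤ) - ((b : ℕ) : ℤ)) * uext u (a : ℕ) ((b : ℕ) + 1)

/-- Action of `f` on `V_m ⊗ V_n`: `f (v ⊗ w) = f v ⊗ w + K⁻¹ v ⊗ f w`, where on `V_m`
`f v_i = [i+1]_q v_{i+1}` and `K⁻¹ v_i = q^{-(m-2i)} v_i`. -/
noncomputable def fT (q : ℂ) (m n : ℕ) (u : W m n) : W m n := fun a b =>
  qint q ((a : ℕ) : ℤ) * uext u ((a : ℕ) - 1) (b : ℕ)
    + q ^ (-((m : ℤ) - 2 * ((a : ℕ) : ℤ))) * qint q ((b : ℕ) : ℤ) *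
        uext u (a : ℕ) ((b : ℕ) - 1)

/-- Action of `K` on `V_m ⊗ V_n`: `K (v ⊗ w) = K v ⊗ K w`. -/
noncomputable def KT (q : ℂ) (m n : ℕ) (u : W m n) : W m n := fun a b =>
  q ^ ((m : ℤ) - 2 * ((a : ℕ) : ℤ)) * q ^ ((n : ℤ) - 2 * ((b : ℕ) : ℤ)) * u a b

/-- Action of `e₀` on the evaluation module `V_m(x) ⊗ V_n(y)`:
`e₀ (v ⊗ w) = q⁻¹ x (f v) ⊗ (K⁻¹ w) + q⁻¹ y v ⊗ (f w)`. -/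
noncomputable def e0T (q x y : ℂ) (m n : ℕ) (u : W m n) : W m n := fun a b =>
  q⁻¹ * x * qint q ((a : ℕ) : ℤ) * q ^ (-((n : ℤ) - 2 * ((b : ℕ) : ℤ))) *
      uext u ((a : ℕ) - 1) (b : ℕ)
    + q⁻¹ * y * qint q ((b : ℕ) : ℤ) * uext u (a : ℕ) ((b : ℕ) - 1)

/-- Action of `f₀` on the evaluation module `V_m(x) ⊗ V_n(y)`:
`f₀ (v ⊗ w) = q x⁻¹ (e v) ⊗ w + q y⁻¹ (K v) ⊗ (e w)`. -/
noncomputable def f0T (q x y : ℂ) (m n : ℕ) (u : W m n) : W m n := fun a b =>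
  q * x⁻¹ * qint q ((m : ℤ) - ((a : ℕ) : ℤ)) * uext u ((a : ℕ) + 1) (b : ℕ)
    + q * y⁻¹ * q ^ ((m : ℤ) - 2 * ((a : ℕ) : ℤ)) * qint q ((n : ℤ) - ((b : ℕ) : ℤ)) *
        uext u (a : ℕ) ((b : ℕ) + 1)

/-- The coefficient `c_{i,l-i} = (-1)^i q^{i(2l-n-i-1)} ∏_{j=0}^i [n-l+j]_q/[m-j+1]_q`. -/
noncomputable def cOmega (q : ℂ) (m n l i : ℕ) : ℂ :=
  (-1 : ℂ) ^ i * q ^ ((i : ℤ) * (2 * (l : ℤ) - (n : ℤ) - (i : ℤ) - 1)) *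
    ∏ j ∈ Finset.range (i + 1),
      qint q ((n : ℤ) - (l : ℤ) + (j : ℤ)) / qint q ((m : ℤ) - (j : ℤ) + 1)

/-- The highest weight vector `Ω_l = ∑_{i=0}^l c_{i,l-i} v_i ⊗ w_{l-i}`. -/
noncomputable def Omega (q : ℂ) (m n l : ℕ) : W m n :=
  ∑ i ∈ Finset.range (l + 1), cOmega q m n l i • basisW m n i (l - i)

/-- The coefficient `d_{i,l} = (-1)^i q^{i(-m+2l-i-1)} ∏_{j=0}^i [m-l+j]_q/[n-j+1]_q`. -/
noncomputable def dPhi (q : ℂ) (m n l i : ℕ) : ℂ :=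
  (-1 : ℂ) ^ i * q ^ ((i : ℤ) * (-(m : ℤ) + 2 * (l : ℤ) - (i : ℤ) - 1)) *
    ∏ j ∈ Finset.range (i + 1),
      qint q ((m : ℤ) - (l : ℤ) + (j : ℤ)) / qint q ((n : ℤ) - (j : ℤ) + 1)

/-- The lowest weight vector `Φ_l = ∑_{i=0}^l d_{i,l} v_{m-l+i} ⊗ w_{n-i}`. -/
noncomputable def Phi (q : ℂ) (m n l : ℕ) : W m n :=
  ∑ i ∈ Finset.range (l + 1), dPhi q m n l i • basisW m n (m - l + i) (n - i)

/-- `φ_{l,j} = e₀^{l-j} f^j Ω₀` in `V_m(x) ⊗ V_n(y)`. -/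
noncomputable def phiLJ (q x y : ℂ) (m n l j : ℕ) : W m n :=
  (e0T q x y m n)^[l - j] ((fT q m n)^[j] (Omega q m n 0))


/-! `Ω₀` is a multiple of `v₀ ⊗ w₀` and `e₀` raises the total degree `a + b` of `v_a ⊗ w_b` by
one, so `e₀^l Ω₀` is homogeneous of degree `l` and its coefficients satisfy a two-term recursion
in `l`. The closed form solves it because of the addition rule
`[a + b]_q = [a]_q q^b + [b]_q q^{-a}`. -/

lemma qint_zero (q : ℂ) : qint q 0 = 0 := by simp [qint]

lemma qint_add {q : ℂ} (hq : q ≠ 0) (a b : ℤ) :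
    qint q (a + b) = qint q a * q ^ b + qint q b * q ^ (-a) := by
  simp only [qint, div_mul_eq_mul_div, ← add_div, sub_mul, ← zpow_add₀ hq]
  congr 1
  ring_nf

lemma qfact_succ (q : ℂ) (l : ℕ) : qfact q (l + 1) = qfact q l * qint q ((l : ℤ) + 1) :=
  Finset.prod_range_succ _ _

lemma qint_mul_ite_congr {P Q : Prop} [Decidable P] [Decidable Q] (q g : ℂ) {k : ℕ}
    (h : 0 < k → (P ↔ Q)) : qint q k * ite P g 0 = qint q k * ite Q g 0 := by
  rcases k.eq_zero_or_pos with rfl | hk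
  · simp [qint_zero]
  · simp only [h hk]

lemma uext_of_not_le {m n : ℕ} (u : W m n) {a b : ℕ} (h : ¬(a ≤ m ∧ b ≤ n)) : uext u a b = 0 :=
  dif_neg h

lemma uext_smul_basisW {m n i j : ℕ} (hi : i ≤ m) (hj : j ≤ n) (c : ℂ) (a b : ℕ) :
    uext (c • basisW m n i j) a b = if a = i ∧ b = j then c else 0 := by
  unfold uext basisW
  split_ifs <;> simp_all

lemma uext_e0T {q x y : ℂ} {m n : ℕ} (u : W m n) {a b : ℕ} (h : a ≤ m ∧ b ≤ n) :
    uext (e0T q x y m n u) a b =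
      q⁻¹ * x * qint q a * q ^ (-((n : ℤ) - 2 * b)) * uext u (a - 1) b
        + q⁻¹ * y * qint q b * uext u a (b - 1) :=
  dif_pos h

lemma Omega_zero (q : ℂ) (m n : ℕ) :
    Omega q m n 0 = (qint q n / qint q ((m : ℤ) + 1)) • basisW m n 0 0 := by
  simp [Omega, cOmega]

/-- `γ_{l,0}^{a,b}` without the factor `[n]_q/[m+1]_q` contributed by `Ω₀`. -/
noncomputable def gammaCoeff (q x y : ℂ) (n l a b : ℕ) : ℂ :=
  x ^ a * y ^ b * qfact q l * q ^ (-(l : ℤ)) * q ^ ((a : ℤ) * ((b : ℤ) - n))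

-- With natural subtraction, `a - 1` and `b - 1` are junk at `a = 0` resp. `b = 0`, where the
-- factors `[a]_q` resp. `[b]_q` vanish.
lemma gammaCoeff_succ {q : ℂ} (hq : q ≠ 0) (x y : ℂ) (n : ℕ) {l a b : ℕ} (hab : a + b = l + 1) :
    gammaCoeff q x y n (l + 1) a b =
      q⁻¹ * x * qint q a * q ^ (-((n : ℤ) - 2 * b)) * gammaCoeff q x y n l (a - 1) b
        + q⁻¹ * y * qint q b * gammaCoeff q x y n l a (b - 1) := by
  rw [← zpow_neg_one q]
  rcases a with _ | a
  · obtain rfl : b = l + 1 := by omega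
    simp only [gammaCoeff, qfact_succ]
    push_cast
    simp only [qint_zero, zero_mul, mul_zero, zero_add, zpow_zero, mul_one, pow_zero, one_mul]
    have hpow : q ^ (-((l : ℤ) + 1)) = q ^ (-1 : ℤ) * q ^ (-(l : ℤ)) := by
      rw [← zpow_add₀ hq]; ring_nf
    linear_combination (y ^ (l + 1) * qfact q l * qint q ((l : ℤ) + 1)) * hpow
  rcases b with _ | b
  · obtain rfl : a = l := by omega
    simp only [gammaCoeff, qfact_succ]
    push_cast
    simp only [qint_zero, zero_mul, mul_zero, add_zero, mul_one, pow_zero]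
    have hpow : q ^ (-((a : ℤ) + 1)) * q ^ (((a : ℤ) + 1) * (0 - n)) =
        q ^ (-1 : ℤ) * q ^ (-((n : ℤ) - 0)) * q ^ (-(a : ℤ)) * q ^ ((a : ℤ) * (0 - n)) := by
      simp only [← zpow_add₀ hq]; ring_nf
    linear_combination (x ^ (a + 1) * qfact q a * qint q ((a : ℤ) + 1)) * hpow
  simp only [gammaCoeff, qfact_succ, Nat.add_sub_cancel]
  push_cast
  set E : ℤ := -((l : ℤ) + 1) + ((a : ℤ) + 1) * ((b : ℤ) + 1 - n)
  have hpow_a : q ^ (-1 : ℤ) * q ^ (-((n : ℤ) - 2 * ((b : ℤ) + 1))) * q ^ (-(l : ℤ)) *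
      q ^ ((a : ℤ) * ((b : ℤ) + 1 - n)) = q ^ E * q ^ ((b : ℤ) + 1) := by
    simp only [E, ← zpow_add₀ hq]; ring_nf
  have hpow_b : q ^ (-1 : ℤ) * q ^ (-(l : ℤ)) * q ^ (((a : ℤ) + 1) * ((b : ℤ) - n)) =
      q ^ E * q ^ (-((a : ℤ) + 1)) := by
    simp only [E, ← zpow_add₀ hq]; ring_nf
  have hqint : qint q ((l : ℤ) + 1) =
      qint q ((a : ℤ) + 1) * q ^ ((b : ℤ) + 1) + qint q ((b : ℤ) + 1) * q ^ (-((a : ℤ) + 1)) := by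
    rw [← qint_add hq]; congr 1; omega
  have hE : q ^ (-((l : ℤ) + 1)) * q ^ (((a : ℤ) + 1) * ((b : ℤ) + 1 - n)) = q ^ E := by
    rw [← zpow_add₀ hq]
  linear_combination (x ^ (a + 1) * y ^ (b + 1) * qfact q l) *
    (q ^ E * hqint + qint q ((l : ℤ) + 1) * hE - qint q ((a : ℤ) + 1) * hpow_a
      - qint q ((b : ℤ) + 1) * hpow_b)

theorem uext_e0T_iterate_smul_basisW {q : ℂ} (hq : q ≠ 0) (x y : ℂ) {m n : ℕ} (hnm : n ≤ m)
    (c : ℂ) {l : ℕ} (hl : l ≤ n) (a b : ℕ) :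
    uext ((e0T q x y m n)^[l] (c • basisW m n 0 0)) a b =
      if a + b = l then gammaCoeff q x y n l a b * c else 0 := by
  induction l generalizing a b with
  | zero =>
    rw [Function.iterate_zero_apply, uext_smul_basisW (Nat.zero_le m) (Nat.zero_le n)]
    split_ifs <;> first | omega | simp_all [gammaCoeff, qfact]
  | succ l ih =>
    by_cases h : a ≤ m ∧ b ≤ n
    · rw [Function.iterate_succ_apply', uext_e0T _ h, ih (by omega), ih (by omega)]
      have ha := qint_mul_ite_congr q (gammaCoeff q x y n l (a - 1) b * c)
        (P := a - 1 + b = l) (Q := a + b = l + 1) (k := a) (by omega)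
      have hb := qint_mul_ite_congr q (gammaCoeff q x y n l a (b - 1) * c)
        (P := a + (b - 1) = l) (Q := a + b = l + 1) (k := b) (by omega)
      by_cases hab : a + b = l + 1
      · simp only [if_pos hab] at ha hb ⊢
        rw [gammaCoeff_succ hq x y n hab]
        linear_combination (q⁻¹ * x * q ^ (-((n : ℤ) - 2 * b))) * ha + (q⁻¹ * y) * hb
      · simp only [if_neg hab, mul_zero] at ha hb ⊢
        linear_combination (q⁻¹ * x * q ^ (-((n : ℤ) - 2 * b))) * ha + (q⁻¹ * y) * hb
    · rw [uext_of_not_le _ h, if_neg (by omega)]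

/-- The coefficient of `v_{l-i} ⊗ w_i` in `φ_{l,0} = e₀^l Ω₀`:
`γ_{l,0}^{l-i,i} = x^{l-i} y^i [l]_q! q^{-l} q^{(l-i)(i-n)} ⋅ ([n]_q/[m+1]_q)`. -/
theorem gamma_l_zero (q : ℂ) (hq : q ≠ 0)
    (x y : ℂ)
    (m n : ℕ) (hnm : n ≤ m) (l i : ℕ) (hl : l ≤ n) (hi : i ≤ l) :
    phiLJ q x y m n l 0 ⟨l - i, by omega⟩ ⟨i, by omega⟩
      = x ^ (l - i) * y ^ i * qfact q l * q ^ (-(l : ℤ)) *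
          q ^ (((l : ℤ) - (i : ℤ)) * ((i : ℤ) - (n : ℤ))) *
          (qint q (n : ℤ) / qint q ((m : ℤ) + 1)) := by
  have h := uext_e0T_iterate_smul_basisW hq x y hnm (qint q n / qint q ((m : ℤ) + 1)) hl (l - i) i
  rw [uext, dif_pos ⟨by omega, by omega⟩, if_pos (by omega), ← Omega_zero] at h
  rw [phiLJ, Nat.sub_zero, Function.iterate_zero_apply, h, gammaCoeff, Nat.cast_sub hi]
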